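/- Let {φ_n} be convex functions ℝ^d → ℝ with ∂φ_n(ℝ^d) ⊆ S for a compact convex set S ⊂ ℝ^d whose every supporting hyperplane touches the boundary of S at most once. Suppose φ_n → φ uniformly on every compact subset of ℝ^d, where φ : ℝ^d → ℝ is convex and ∇φ is a homeomorphism from Int(Y) to Int(S) for some Y ⊆ ℝ^d with nonempty interior. Then φ is differentiable everywhere in ℝ^d and sup_{x ∈ ℝ^d} sup_{y ∈ ∂φ_n(x)} ‖y − ∇φ(x)‖ → 0 as n → ∞, i.e., the subgradients converge uniformly on all of ℝ^d. -/

import Mathlib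

/-!
Since `∂φₙ ⊆ S`, the increment of every `φₙ`, hence of `φ`, along a vector `w` is at most
`sup_{s ∈ S} ⟪w, s⟫`, so `∂φ ⊆ S`; and the single-touch condition makes `S` strictly convex.
If `∂φ(x)` contained two points, their midpoint would lie in `Int S = ∇φ(Int Y)`, say equal to
`∇φ(y)`; the set where a fixed vector is a subgradient is convex, so it contains the segment
`[y, x]`, whose points near `y` lie in the open set `Int Y`; injectivity of `∇φ` there forces
`x = y`, where `∂φ` is a singleton.

For the uniform convergence, take bad points `xₖ`, `ξₖ ∈ ∂φ_{nₖ}(xₖ)`, `vₖ ∈ ∂φ(xₖ)` with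
`‖ξₖ - vₖ‖ > ε` and pass to limits along an ultrafilter. If `xₖ → x₀`, both limits are subgradients
of `φ` at `x₀`, hence equal. If `‖xₖ‖ → ∞` in a direction `u`, monotonicity of the subdifferential
against a point `y` with `∇φ(y) = s` gives `⟪u, s⟫ ≤ ⟪u, lim ξₖ⟫` for each `s ∈ Int S`; so both
limits maximise `⟪u, ·⟫` on `S`, and the single-touch condition makes them equal.
-/

open scoped RealInnerProductSpace
open Filter

noncomputable section

abbrev E (d : ℕ) : Type := EuclideanSpace ℝ (Fin d)

/-- Subdifferential of a real-valued function at a point. -/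
def subdiffR {d : ℕ} (f : E d → ℝ) (x : E d) : Set (E d) :=
  {ξ | ∀ y : E d, f x + ⟪ξ, y - x⟫ ≤ f y}

open Set Topology

theorem TendstoLocallyUniformly.comp_tendsto {ι ι' α β : Type*} [TopologicalSpace α]
    [UniformSpace β] {F : ι → α → β} {f : α → β} {p : Filter ι} (h : TendstoLocallyUniformly F f p)
    {q : Filter ι'} {n : ι' → ι} (hn : Tendsto n q p) :
    TendstoLocallyUniformly (fun k => F (n k)) f q :=
  fun u hu x => (h u hu x).imp fun _ ⟨ht, hev⟩ => ⟨ht, hn.eventually hev⟩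

theorem IsCompact.exists_tendsto_ultrafilter {ι X : Type*} [TopologicalSpace X] {K : Set X}
    (hK : IsCompact K) {l : Ultrafilter ι} {g : ι → X} (hg : ∀ᶠ k in l, g k ∈ K) :
    ∃ a ∈ K, Tendsto g l (𝓝 a) :=
  hK.ultrafilter_le_nhds' (l.map g) hg

theorem Ultrafilter.exists_tendsto_or_tendsto_norm_atTop {ι X : Type*} [NormedAddCommGroup X]
    [ProperSpace X] (l : Ultrafilter ι) (x : ι → X) :
    (∃ a, Tendsto x l (𝓝 a)) ∨ Tendsto (fun k => ‖x k‖) l atTop := by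
  by_cases hbdd : ∃ M, ∀ᶠ k in l, ‖x k‖ ≤ M
  · obtain ⟨M, hM⟩ := hbdd
    obtain ⟨a, -, ha⟩ := (isCompact_closedBall (0 : X) M).exists_tendsto_ultrafilter
      (hM.mono fun k hk => mem_closedBall_zero_iff.2 hk)
    exact .inl ⟨a, ha⟩
  · exact .inr <| tendsto_atTop.2 fun M =>
      (Ultrafilter.eventually_not.2 fun h => hbdd ⟨M, h⟩).mono fun k hk => (not_le.1 hk).le

theorem Ultrafilter.exists_tendsto_inv_norm_smul {ι X : Type*} [NormedAddCommGroup X]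
    [NormedSpace ℝ X] [ProperSpace X] {l : Ultrafilter ι} {x : ι → X}
    (hx : Tendsto (fun k => ‖x k‖) l atTop) :
    ∃ u, ‖u‖ = 1 ∧ Tendsto (fun k => ‖x k‖⁻¹ • x k) l (𝓝 u) := by
  obtain ⟨u, hu, hlim⟩ := (isCompact_sphere (0 : X) 1).exists_tendsto_ultrafilter
    (g := fun k => ‖x k‖⁻¹ • x k)
    ((hx.eventually_gt_atTop 0).mono fun k (hk : 0 < ‖x k‖) => by simp [norm_smul, hk.ne'])
  exact ⟨u, mem_sphere_zero_iff_norm.1 hu, hlim⟩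

theorem Convex.strictConvex_of_subsingleton_inner_eq {V : Type*} [NormedAddCommGroup V]
    [InnerProductSpace ℝ V] [CompleteSpace V] {S : Set V} (hSconv : Convex ℝ S)
    (hSint : (interior S).Nonempty)
    (hsupport : ∀ v : V, v ≠ 0 → ∀ c : ℝ, (∀ s ∈ S, (⟪v, s⟫ : ℝ) ≤ c) →
      {s ∈ S | (⟪v, s⟫ : ℝ) = c}.Subsingleton) :
    StrictConvex ℝ S := by
  intro x hx y hy hxy a b ha hb hab
  by_contra hz
  obtain ⟨F, hF⟩ := geometric_hahn_banach_open_point hSconv.interior isOpen_interior hz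
  set v := (InnerProductSpace.toDual ℝ V).symm F
  have hv : ∀ w, ⟪v, w⟫ = F w := fun w => InnerProductSpace.toDual_symm_apply
  have hFS : ∀ s ∈ S, F s ≤ F (a • x + b • y) := by
    have hcl : S ⊆ closure (interior S) :=
      hSconv.closure_interior_eq_closure_of_nonempty_interior hSint ▸ subset_closure
    exact fun s hs => closure_minimal (fun w hw => (hF w hw).le)
      (isClosed_le F.continuous continuous_const) (hcl hs)
  have hv0 : v ≠ 0 := by
    obtain ⟨s, hs⟩ := hSint
    rintro h0
    simpa [← hv, h0] using hF s hs
  set c := F (a • x + b • y) with hc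
  have hcomb : c = a * F x + b * F y := by simp [hc]
  have hsplit : a * c + b * c = c := by rw [← add_mul, hab, one_mul]
  have hFx := hFS x hx
  have hFy := hFS y hy
  refine hxy (hsupport v hv0 c (fun s hs => (hv s).symm ▸ hFS s hs)
    ⟨hx, (hv x).trans (le_antisymm hFx ?_)⟩ ⟨hy, (hv y).trans (le_antisymm hFy ?_)⟩)
  · exact le_of_mul_le_mul_left (by linarith [mul_le_mul_of_nonneg_left hFy hb.le]) ha
  · exact le_of_mul_le_mul_left (by linarith [mul_le_mul_of_nonneg_left hFx ha.le]) hb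

section

variable {d : ℕ}

theorem subdiffR_nonempty {f : E d → ℝ} (hf : ConvexOn ℝ univ f) (x : E d) :
    (subdiffR f x).Nonempty := by
  have hopen : IsOpen {p : E d × ℝ | p.1 ∈ univ ∧ f p.1 < p.2} := by
    simpa using isOpen_lt (hf.locallyLipschitz.continuous.comp continuous_fst) continuous_snd
  obtain ⟨F, hF⟩ := geometric_hahn_banach_open_point hf.convex_strict_epigraph hopen
    (by simp : (x, f x) ∉ {p : E d × ℝ | p.1 ∈ univ ∧ f p.1 < p.2})
  -- `F (y, r) = ℓ y + r a` with `a < 0`, and `ℓ / (-a)` is a subgradient at `x`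
  set ℓ := F.comp (ContinuousLinearMap.inl ℝ (E d) ℝ)
  set a := F (0, 1)
  have hF_apply : ∀ y r, F (y, r) = ℓ y + r * a := fun y r => by
    have hyr : (y, r) = (y, 0) + r • ((0 : E d), (1 : ℝ)) := by simp
    rw [hyr, map_add, map_smul, smul_eq_mul]
    rfl
  have hlt : ∀ y, ∀ t > 0, ℓ y + (f y + t) * a < ℓ x + f x * a := fun y t ht => by
    simpa [hF_apply] using hF (y, f y + t) ⟨trivial, by linarith⟩
  have ha : 0 < -a := by nlinarith [hlt x 1 one_pos]
  have hle : ∀ y, ℓ y + f y * a ≤ ℓ x + f x * a := fun y =>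
    le_of_forall_pos_lt_add fun ε hε => by
      have := hlt y (ε / -a) (div_pos hε ha)
      have e : ε / -a * a = -ε := by rw [div_neg, neg_mul, div_mul_cancel₀ ε (neg_pos.1 ha).ne]
      linarith
  refine ⟨(InnerProductSpace.toDual ℝ (E d)).symm ((-a)⁻¹ • ℓ), fun y => ?_⟩
  rw [InnerProductSpace.toDual_symm_apply, smul_apply, smul_eq_mul, map_sub,
    ← le_sub_iff_add_le', inv_mul_le_iff₀ ha]
  linarith [hle y]

theorem inner_sub_nonneg_of_mem_subdiffR {f : E d → ℝ} {x y ξ η : E d}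
    (hξ : ξ ∈ subdiffR f x) (hη : η ∈ subdiffR f y) : 0 ≤ ⟪ξ - η, x - y⟫ := by
  have h1 := hξ y
  have h2 := hη x
  rw [← neg_sub x y, inner_neg_right] at h1
  rw [inner_sub_left]
  linarith

theorem convex_subdiffR (f : E d → ℝ) (x : E d) : Convex ℝ (subdiffR f x) := by
  intro ξ hξ η hη a b ha hb hab y
  obtain rfl : b = 1 - a := by linarith
  rw [inner_add_left, real_inner_smul_left, real_inner_smul_left]
  linear_combination mul_le_mul_of_nonneg_left (hξ y) ha + mul_le_mul_of_nonneg_left (hη y) hb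

theorem ConvexOn.convex_setOf_mem_subdiffR {f : E d → ℝ} (hf : ConvexOn ℝ univ f) (ξ : E d) :
    Convex ℝ {x | ξ ∈ subdiffR f x} := by
  intro x hx y hy a b ha hb hab w
  have hfxy := hf.2 (mem_univ x) (mem_univ y) ha hb hab
  have hxw := hx w
  have hyw := hy w
  obtain rfl : b = 1 - a := by linarith
  simp only [smul_eq_mul] at hfxy
  simp only [inner_sub_right, inner_add_right, real_inner_smul_right] at hxw hyw ⊢
  linear_combination hfxy + mul_le_mul_of_nonneg_left hxw ha + mul_le_mul_of_nonneg_left hyw hb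

theorem mem_subdiffR_of_tendsto {ι : Type*} {l : Filter ι} [l.NeBot] {g : ι → E d → ℝ}
    {φ : E d → ℝ} (hg : TendstoLocallyUniformly g φ l) (hφ : Continuous φ) {x ξ : ι → E d}
    {x₀ ξ₀ : E d} (hx : Tendsto x l (𝓝 x₀)) (hξ : Tendsto ξ l (𝓝 ξ₀))
    (hmem : ∀ k, ξ k ∈ subdiffR (g k) (x k)) : ξ₀ ∈ subdiffR φ x₀ := fun z =>
  le_of_tendsto_of_tendsto'
    ((hg.tendsto_comp hφ.continuousAt hx).add (hξ.inner (tendsto_const_nhds.sub hx)))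
    (hg.tendsto_comp hφ.continuousAt tendsto_const_nhds) fun k => hmem k z

theorem subdiffR_subset_of_tendsto {ι : Type*} {l : Filter ι} [l.NeBot] {S : Set (E d)}
    (hSclosed : IsClosed S) (hSconv : Convex ℝ S) {g : ι → E d → ℝ}
    (hg : ∀ k, ConvexOn ℝ univ (g k)) (hgS : ∀ k x, subdiffR (g k) x ⊆ S) {φ : E d → ℝ}
    (hlim : ∀ z, Tendsto (fun k => g k z) l (𝓝 (φ z))) (x : E d) : subdiffR φ x ⊆ S := by
  intro ξ hξ
  by_contra hξS
  obtain ⟨F, c, hFS, hFξ⟩ := geometric_hahn_banach_closed_point hSconv hSclosed hξS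
  set w := (InnerProductSpace.toDual ℝ (E d)).symm F
  have hw : ∀ z, ⟪z, w⟫ = F z := fun z => by
    rw [real_inner_comm]; exact InnerProductSpace.toDual_symm_apply
  -- along `w` each `g k`, hence `φ`, grows by at most `c`, while `ξ` forces growth `F ξ > c`
  have hgrowth : ∀ k, g k (x + w) - g k x ≤ c := fun k => by
    obtain ⟨ζ, hζ⟩ := subdiffR_nonempty (hg k) (x + w)
    have := hζ x
    rw [sub_add_cancel_left, inner_neg_right, hw] at this
    linarith [hFS ζ (hgS k _ hζ)]
  have := hξ (x + w)
  rw [add_sub_cancel_left, hw] at this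
  linarith [le_of_tendsto ((hlim _).sub (hlim _)) (Eventually.of_forall hgrowth)]

theorem eq_of_mem_subdiffR_of_injOn {φ : E d → ℝ} (hφ : ConvexOn ℝ univ φ) {U : Set (E d)}
    (hU : IsOpen U) {g : E d → E d} (hg : ∀ z ∈ U, subdiffR φ z = {g z}) (hinj : InjOn g U)
    {x y m : E d} (hy : y ∈ U) (hmx : m ∈ subdiffR φ x) (hmy : m ∈ subdiffR φ y) : x = y := by
  by_contra hxy
  -- points of `[y, x]` near `y` lie in `U` and have the subgradient `m`, like `y`
  have hline : Tendsto (fun t : ℝ => AffineMap.lineMap y x t) (𝓝[>] 0) (𝓝 y) := by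
    simpa using (AffineMap.lineMap_continuous.tendsto' 0 y (by simp)).mono_left nhdsWithin_le_nhds
  obtain ⟨t, htU, ht1, ht0⟩ := ((hline.eventually (hU.mem_nhds hy)).and
    ((eventually_lt_nhds one_pos).filter_mono nhdsWithin_le_nhds |>.and self_mem_nhdsWithin)).exists
  have hmt : m ∈ subdiffR φ (AffineMap.lineMap y x t) :=
    (hφ.convex_setOf_mem_subdiffR m).lineMap_mem hmy hmx ⟨le_of_lt ht0, ht1.le⟩
  have hgm : ∀ z ∈ U, m ∈ subdiffR φ z → g z = m := fun z hz hm => by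
    rw [hg z hz] at hm; exact hm.symm
  have := hinj htU hy ((hgm _ htU hmt).trans (hgm y hy hmy).symm)
  rw [AffineMap.lineMap_eq_left_iff] at this
  exact this.elim (fun h => hxy h.symm) (ne_of_gt ht0)

theorem exists_subdiffR_eq_singleton {S : Set (E d)} (hS : StrictConvex ℝ S) {φ : E d → ℝ}
    (hφ : ConvexOn ℝ univ φ) (hφS : ∀ x, subdiffR φ x ⊆ S) {U : Set (E d)} (hU : IsOpen U)
    {g : E d → E d} (hg : ∀ z ∈ U, subdiffR φ z = {g z}) (hinj : InjOn g U)
    (hsurj : interior S ⊆ g '' U) (x : E d) : ∃ v, subdiffR φ x = {v} := by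
  obtain ⟨v, hv⟩ := subdiffR_nonempty hφ x
  refine ⟨v, eq_singleton_iff_unique_mem.2 ⟨hv, fun ξ hξ => ?_⟩⟩
  by_contra hne
  have hhalf : (0 : ℝ) < 1 / 2 := by norm_num
  have hm : (1 / 2 : ℝ) • ξ + (1 / 2 : ℝ) • v ∈ subdiffR φ x :=
    convex_subdiffR φ x hξ hv hhalf.le hhalf.le (add_halves 1)
  obtain ⟨y, hyU, hgy⟩ := hsurj <| hS (hφS x hξ) (hφS x hv) hne hhalf hhalf (add_halves 1)
  obtain rfl : x = y :=
    eq_of_mem_subdiffR_of_injOn hφ hU hg hinj hyU hm (by rw [hg y hyU, hgy]; rfl)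
  rw [hg x hyU] at hξ hv
  exact hne (hξ.trans hv.symm)

theorem inner_le_inner_of_tendsto_norm_atTop {ι : Type*} {l : Filter ι} [l.NeBot]
    {g : ι → E d → ℝ} {x ξ η : ι → E d} {y u ξ₀ η₀ : E d}
    (hx : Tendsto (fun k => ‖x k‖) l atTop) (hu : Tendsto (fun k => ‖x k‖⁻¹ • x k) l (𝓝 u))
    (hξ : ∀ k, ξ k ∈ subdiffR (g k) (x k)) (hη : ∀ k, η k ∈ subdiffR (g k) y)
    (hξ₀ : Tendsto ξ l (𝓝 ξ₀)) (hη₀ : Tendsto η l (𝓝 η₀)) : ⟪u, η₀⟫ ≤ ⟪u, ξ₀⟫ := by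
  have hdir : Tendsto (fun k => ‖x k‖⁻¹ • (x k - y)) l (𝓝 u) := by
    simpa [smul_sub] using hu.sub (hx.inv_tendsto_atTop.smul_const y)
  have hmono : ∀ k, 0 ≤ ⟪ξ k - η k, ‖x k‖⁻¹ • (x k - y)⟫ := fun k => by
    rw [real_inner_smul_right]
    exact mul_nonneg (inv_nonneg.2 (norm_nonneg _)) (inner_sub_nonneg_of_mem_subdiffR (hξ k) (hη k))
  have := ge_of_tendsto ((hξ₀.sub hη₀).inner hdir) (Eventually.of_forall hmono)
  rw [inner_sub_left, real_inner_comm, real_inner_comm u η₀] at this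
  linarith

end

section

variable {d : ℕ} {ι : Type*} {l : Ultrafilter ι} {S : Set (E d)} {φ : E d → ℝ}

theorem isMaxOn_inner_of_tendsto_norm_atTop (hScomp : IsCompact S) (hSconv : Convex ℝ S)
    (hSint : (interior S).Nonempty) (hsurj : ∀ s ∈ interior S, ∃ y, subdiffR φ y = {s})
    (hφ : Continuous φ) {g : ι → E d → ℝ} (hg : ∀ k, ConvexOn ℝ univ (g k))
    (hgS : ∀ k x, subdiffR (g k) x ⊆ S) (hlim : TendstoLocallyUniformly g φ l)
    {x ξ : ι → E d} {u ξ₀ : E d} (hx : Tendsto (fun k => ‖x k‖) l atTop)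
    (hu : Tendsto (fun k => ‖x k‖⁻¹ • x k) l (𝓝 u)) (hξ : ∀ k, ξ k ∈ subdiffR (g k) (x k))
    (hξ₀ : Tendsto ξ l (𝓝 ξ₀)) : IsMaxOn (fun s => ⟪u, s⟫) S ξ₀ := by
  have hint : ∀ s ∈ interior S, ⟪u, s⟫ ≤ ⟪u, ξ₀⟫ := fun s hs => by
    obtain ⟨y, hy⟩ := hsurj s hs
    choose η hη using fun k => subdiffR_nonempty (hg k) y
    obtain ⟨η₀, -, hη₀⟩ :=
      hScomp.exists_tendsto_ultrafilter (Eventually.of_forall fun k => hgS k y (hη k))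
    have hη₀s : η₀ = s := by
      simpa [hy] using mem_subdiffR_of_tendsto hlim hφ tendsto_const_nhds hη₀ hη
    exact hη₀s ▸ inner_le_inner_of_tendsto_norm_atTop hx hu hξ hη hξ₀ hη₀
  have hcl : S ⊆ closure (interior S) :=
    hSconv.closure_interior_eq_closure_of_nonempty_interior hSint ▸ subset_closure
  exact fun s hs => closure_minimal hint
    (isClosed_le (f := fun s => ⟪u, s⟫) (by fun_prop) continuous_const) (hcl hs)

theorem eq_of_tendsto_of_mem_subdiffR (hScomp : IsCompact S) (hSconv : Convex ℝ S)
    (hSint : (interior S).Nonempty)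
    (hsupport : ∀ v : E d, v ≠ 0 → ∀ c : ℝ, (∀ s ∈ S, (⟪v, s⟫ : ℝ) ≤ c) →
      {s ∈ S | (⟪v, s⟫ : ℝ) = c}.Subsingleton)
    (hφ : ConvexOn ℝ univ φ) (hφS : ∀ x, subdiffR φ x ⊆ S)
    (hsingle : ∀ x, ∃ v, subdiffR φ x = {v}) (hsurj : ∀ s ∈ interior S, ∃ y, subdiffR φ y = {s})
    {f : ι → E d → ℝ} (hf : ∀ k, ConvexOn ℝ univ (f k)) (hfS : ∀ k x, subdiffR (f k) x ⊆ S)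
    (hlim : TendstoLocallyUniformly f φ l) {x ξ v : ι → E d} {ξ₀ v₀ : E d}
    (hξ : ∀ k, ξ k ∈ subdiffR (f k) (x k)) (hv : ∀ k, v k ∈ subdiffR φ (x k))
    (hξ₀ : Tendsto ξ l (𝓝 ξ₀)) (hv₀ : Tendsto v l (𝓝 v₀)) : ξ₀ = v₀ := by
  have hφc : Continuous φ := hφ.locallyLipschitz.continuous
  have hconst : TendstoLocallyUniformly (fun _ : ι => φ) φ l := fun _ hu _ =>
    ⟨univ, univ_mem, Eventually.of_forall fun _ _ _ => refl_mem_uniformity hu⟩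
  rcases l.exists_tendsto_or_tendsto_norm_atTop x with ⟨x₀, hx₀⟩ | hx
  · obtain ⟨w, hw⟩ := hsingle x₀
    have hξw := mem_subdiffR_of_tendsto hlim hφc hx₀ hξ₀ hξ
    have hvw := mem_subdiffR_of_tendsto hconst hφc hx₀ hv₀ hv
    rw [hw] at hξw hvw
    exact hξw.trans hvw.symm
  · obtain ⟨u, hu1, hu⟩ := l.exists_tendsto_inv_norm_smul hx
    have hmaxξ := isMaxOn_inner_of_tendsto_norm_atTop hScomp hSconv hSint hsurj hφc hf hfS hlim
      hx hu hξ hξ₀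
    have hmaxv := isMaxOn_inner_of_tendsto_norm_atTop hScomp hSconv hSint hsurj hφc
      (fun _ => hφ) (fun _ => hφS) hconst hx hu hv hv₀
    have hξ₀S : ξ₀ ∈ S := hScomp.isClosed.mem_of_tendsto hξ₀
      (Eventually.of_forall fun k => hfS k _ (hξ k))
    have hv₀S : v₀ ∈ S := hScomp.isClosed.mem_of_tendsto hv₀
      (Eventually.of_forall fun k => hφS _ (hv k))
    have hu0 : u ≠ 0 := by rintro rfl; simp at hu1
    exact hsupport u hu0 _ (fun s hs => hmaxξ hs) ⟨hξ₀S, rfl⟩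
      ⟨hv₀S, le_antisymm (hmaxξ hv₀S) (hmaxv hξ₀S)⟩

theorem exists_forall_ge_norm_sub_le_of_mem_subdiffR (hScomp : IsCompact S) (hSconv : Convex ℝ S)
    (hSint : (interior S).Nonempty)
    (hsupport : ∀ v : E d, v ≠ 0 → ∀ c : ℝ, (∀ s ∈ S, (⟪v, s⟫ : ℝ) ≤ c) →
      {s ∈ S | (⟪v, s⟫ : ℝ) = c}.Subsingleton)
    (hφ : ConvexOn ℝ univ φ) (hφS : ∀ x, subdiffR φ x ⊆ S)
    (hsingle : ∀ x, ∃ v, subdiffR φ x = {v}) (hsurj : ∀ s ∈ interior S, ∃ y, subdiffR φ y = {s})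
    {φn : ℕ → E d → ℝ} (hconv : ∀ n, ConvexOn ℝ univ (φn n)) (hsub : ∀ n x, subdiffR (φn n) x ⊆ S)
    (hlim : TendstoLocallyUniformly φn φ atTop) {ε : ℝ} (hε : 0 < ε) :
    ∃ N : ℕ, ∀ n ≥ N, ∀ x, ∀ ξ ∈ subdiffR (φn n) x, ∀ v ∈ subdiffR φ x, ‖ξ - v‖ ≤ ε := by
  by_contra! hbad
  choose n hn x ξ hξ v hv hlt using hbad
  obtain ⟨l, hl⟩ := exists_ultrafilter_le (atTop : Filter ℕ)
  obtain ⟨ξ₀, -, hξ₀⟩ := hScomp.exists_tendsto_ultrafilter (l := l)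
    (.of_forall fun k => hsub _ _ (hξ k))
  obtain ⟨v₀, -, hv₀⟩ := hScomp.exists_tendsto_ultrafilter (l := l)
    (.of_forall fun k => hφS _ (hv k))
  have heq : ξ₀ = v₀ := eq_of_tendsto_of_mem_subdiffR hScomp hSconv hSint hsupport hφ hφS hsingle
    hsurj (fun k => hconv (n k)) (fun k => hsub (n k))
    (hlim.comp_tendsto (tendsto_atTop_mono hn hl)) hξ hv hξ₀ hv₀
  have hgap : ε ≤ ‖ξ₀ - v₀‖ := ge_of_tendsto (hξ₀.sub hv₀).norm (.of_forall fun k => (hlt k).le)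
  rw [heq, sub_self, norm_zero] at hgap
  linarith

end

/-- Convex `φ_n : ℝ^d → ℝ` with subgradients in a compact convex `S` whose
supporting hyperplanes touch `Bd S` at most once, converging uniformly on every compact set
to a convex `φ` whose gradient is a homeomorphism from `Int Y` onto `Int S` (`Int Y ≠ ∅`).
Then `φ` is differentiable everywhere in `ℝ^d` and
`sup_{x ∈ ℝ^d} sup_{ξ ∈ ∂φ_n(x)} ‖ξ − ∇φ(x)‖ → 0`. -/
theorem statement19 {d : ℕ} (S : Set (E d)) (hScomp : IsCompact S) (hSconv : Convex ℝ S)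
    (hsupport : ∀ v : E d, v ≠ 0 → ∀ c : ℝ, (∀ s ∈ S, (⟪v, s⟫ : ℝ) ≤ c) →
      {s ∈ S | (⟪v, s⟫ : ℝ) = c}.Subsingleton)
    (φn : ℕ → E d → ℝ) (hconv : ∀ n, ConvexOn ℝ Set.univ (φn n))
    (hsub : ∀ n x, subdiffR (φn n) x ⊆ S)
    (φ : E d → ℝ) (hφ : ConvexOn ℝ Set.univ φ)
    (hunif : ∀ Kc : Set (E d), IsCompact Kc →
      TendstoUniformlyOn (fun n => φn n) φ atTop Kc)
    (Y : Set (E d)) (hY : (interior Y).Nonempty)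
    (gφ : E d → E d) (hgdiff : ∀ x ∈ interior Y, subdiffR φ x = {gφ x})
    (hhom : ∃ h : (interior Y) ≃ₜ (interior S), ∀ p : interior Y, (h p : E d) = gφ p) :
    (∀ x : E d, ∃ v : E d, subdiffR φ x = {v}) ∧
    (∀ ε > (0 : ℝ), ∃ N : ℕ, ∀ n ≥ N, ∀ x : E d,
      ∀ ξ ∈ subdiffR (φn n) x, ∀ v ∈ subdiffR φ x, ‖ξ - v‖ ≤ ε) := by
  obtain ⟨h, hh⟩ := hhom
  have hinj : InjOn gφ (interior Y) := fun a ha b hb hab => congrArg Subtype.val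
    (h.injective (Subtype.ext (by simpa [hh] using hab)) : (⟨a, ha⟩ : interior Y) = ⟨b, hb⟩)
  have hsurj : interior S ⊆ gφ '' interior Y := fun s hs =>
    ⟨h.symm ⟨s, hs⟩, (h.symm ⟨s, hs⟩).2, by rw [← hh, h.apply_symm_apply]⟩
  have hSint : (interior S).Nonempty := let ⟨y, hy⟩ := hY; ⟨_, (h ⟨y, hy⟩).2⟩
  have hφS : ∀ x, subdiffR φ x ⊆ S := subdiffR_subset_of_tendsto hScomp.isClosed hSconv hconv hsub
    fun z => (hunif {z} isCompact_singleton).tendsto_at (mem_singleton z)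
  have hsingle : ∀ x, ∃ v, subdiffR φ x = {v} := exists_subdiffR_eq_singleton
    (hSconv.strictConvex_of_subsingleton_inner_eq hSint hsupport) hφ hφS isOpen_interior hgdiff
    hinj hsurj
  have hsurj' : ∀ s ∈ interior S, ∃ y, subdiffR φ y = {s} := fun s hs =>
    (hsurj hs).imp fun y ⟨hy, hys⟩ => hys ▸ hgdiff y hy
  refine ⟨hsingle, fun ε hε => exists_forall_ge_norm_sub_le_of_mem_subdiffR hScomp hSconv hSint
    hsupport hφ hφS hsingle hsurj' hconv hsub
    (tendstoLocallyUniformly_iff_forall_isCompact.2 hunif) hε⟩
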